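/- For every pivot (v, i) ∈ [1,m] × [1,n], the following recurrence holds: R(v,i) = ∞ if mfi(v,i) = [-∞,∞]; R(v,i) = i if mfi(v,i) ≠ [-∞,∞] and v has no right child in CT(P); and otherwise (mfi(v,i) ≠ [-∞,∞] and v.R ≠ nil) R(v,i) = min{ R(v.R, j) : i+1 ≤ j ≤ n, T[i] < T[j], i < L(v.R, j) }. -/

import Mathlib

/-- Ordered binary trees (possibly empty). -/
inductive BTree : Type
  | nil : BTree
  | node : BTree → BTree → BTree
  deriving DecidableEq

/-- The minimum value of a list of integers (with default `0` for the empty list). -/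
def minval (l : List ℤ) : ℤ := (@List.minimum ℤ Int.instLinearOrder.toPartialOrder.toPreorder _ l).untopD 0

/-- The 0-based index of the leftmost occurrence of the minimum value. -/
def minidx0 (l : List ℤ) : ℕ := l.idxOf (minval l)

theorem minidx0_lt_length {l : List ℤ} (h : l ≠ []) : minidx0 l < l.length := by
  obtain ⟨a, ha⟩ := WithTop.ne_top_iff_exists.mp (List.minimum_ne_top_of_ne_nil h)
  have hmem : a ∈ l := List.minimum_mem ha.symm
  have hval : minval l = a := by simp [minval, ← ha]
  rw [minidx0, hval]
  exact List.idxOf_lt_length_iff.mpr hmem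

/-- The Cartesian tree of a string of integers. -/
def CT (l : List ℤ) : BTree :=
  if h : l = [] then .nil
  else .node (CT (l.take (minidx0 l))) (CT (l.drop (minidx0 l + 1)))
termination_by l.length
decreasing_by
  · have := minidx0_lt_length h
    simp [List.length_take]
    omega
  · have : 0 < l.length := List.length_pos_iff.mpr h
    simp [List.length_drop]
    omega

/-- The value of the 1-based position `i` of the string `T` (default `0`). -/
def val (T : List ℤ) (i : ℕ) : ℤ := T.getD (i - 1) 0

/-- `IsSubSeq n m I` : `I` is a strictly increasing sequence of `m` subscripts in `[1, n]`. -/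
def IsSubSeq (n m : ℕ) (I : List ℕ) : Prop :=
  I.length = m ∧ I.Pairwise (· < ·) ∧ ∀ j ∈ I, 1 ≤ j ∧ j ≤ n

/-- The subsequence `T_I` of `T` selected by the (1-based) subscript sequence `I`. -/
def seqAt (T : List ℤ) (I : List ℕ) : List ℤ := I.map (val T)

/-- The substring `P[a..b]` of `P` (1-based, inclusive). -/
def subslice (P : List ℤ) (a b : ℕ) : List ℤ := (P.take b).drop (a - 1)

/-- The left end of the maximal interval around position `v` in which `P[v]` is minimal:
one plus the rightmost position `j < v` carrying a value smaller than `P[v]` (or `1`). -/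
def leftEnd (P : List ℤ) (v : ℕ) : ℕ :=
  (((Finset.Icc 1 (v - 1)).filter (fun j => val P j < val P v)).max.unbotD 0) + 1

/-- The right end of the maximal interval around position `v` in which `P[v]` is minimal:
the leftmost position `j > v` carrying a value smaller than `P[v]`, minus one (or `|P|`). -/
def rightEnd (P : List ℤ) (v : ℕ) : ℕ :=
  (((Finset.Icc (v + 1) P.length).filter (fun j => val P j < val P v)).min.untopD
    (P.length + 1)) - 1

/-- `P_v`: the substring of `P` spanned by the subtree of `CT(P)` rooted at node `v`
(nodes are identified with 1-based positions of `P`). -/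
def Psub (P : List ℤ) (v : ℕ) : List ℤ := subslice P (leftEnd P v) (rightEnd P v)

/-- The left child `v.L` of node `v` in `CT(P)` (as a 1-based position), if it exists. -/
def leftChild (P : List ℤ) (v : ℕ) : Option ℕ :=
  if leftEnd P v < v then some (leftEnd P v + minidx0 (subslice P (leftEnd P v) (v - 1)))
  else none

/-- The right child `v.R` of node `v` in `CT(P)` (as a 1-based position), if it exists. -/
def rightChild (P : List ℤ) (v : ℕ) : Option ℕ :=
  if v < rightEnd P v then some (v + 1 + minidx0 (subslice P (v + 1) (rightEnd P v)))
  else none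

/-- `[ℓ, r]` is a fixed-interval with pivot `(v, i)`. -/
def IsFixedInterval (T P : List ℤ) (v i ℓ r : ℕ) : Prop :=
  1 ≤ ℓ ∧ r ≤ T.length ∧
    ∃ I : List ℕ, IsSubSeq T.length (Psub P v).length I ∧ i ∈ I ∧
      (∀ j ∈ I, ℓ ≤ j ∧ j ≤ r) ∧ CT (seqAt T I) = CT (Psub P v) ∧
      val T i = minval (seqAt T I)

/-- `IntervalSsubset (ℓ', r') (ℓ, r)` : the interval `[ℓ', r']` is strictly contained
in the interval `[ℓ, r]`. -/
def IntervalSsubset (p q : ℕ × ℕ) : Prop := q.1 ≤ p.1 ∧ p.2 ≤ q.2 ∧ p ≠ q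

/-- `[ℓ, r]` is a minimal fixed-interval with pivot `(v, i)`. -/
def IsMinFixedInterval (T P : List ℤ) (v i ℓ r : ℕ) : Prop :=
  IsFixedInterval T P v i ℓ r ∧
    ¬∃ ℓ' r', IsFixedInterval T P v i ℓ' r' ∧ IntervalSsubset (ℓ', r') (ℓ, r)

open Classical in
/-- The left endpoint `L(v, i)` of the minimal fixed-interval `mfi(v, i)`,
which is `-∞` (i.e. `⊥`) if no (minimal) fixed-interval with pivot `(v, i)` exists. -/
noncomputable def mfiL (T P : List ℤ) (v i : ℕ) : WithBot ℕ :=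
  if h : ∃ ℓ r, IsMinFixedInterval T P v i ℓ r then (h.choose : WithBot ℕ) else ⊥

open Classical in
/-- The right endpoint `R(v, i)` of the minimal fixed-interval `mfi(v, i)`,
which is `∞` (i.e. `⊤`) if no (minimal) fixed-interval with pivot `(v, i)` exists. -/
noncomputable def mfiR (T P : List ℤ) (v i : ℕ) : WithTop ℕ :=
  if h : ∃ ℓ r, IsMinFixedInterval T P v i ℓ r then (h.choose_spec.choose : WithTop ℕ) else ⊤

/-- `I` is a trace of pattern `P` in text `T`. -/
def IsTrace (T P : List ℤ) (I : List ℕ) : Prop :=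
  IsSubSeq T.length P.length I ∧ CT (seqAt T I) = CT P

/-- `[ℓ, r]` is an occurrence interval for `P` over `T`. -/
def IsOccInterval (T P : List ℤ) (ℓ r : ℕ) : Prop :=
  1 ≤ ℓ ∧ r ≤ T.length ∧ ∃ I, IsTrace T P I ∧ ∀ j ∈ I, ℓ ≤ j ∧ j ≤ r

/-- `[ℓ, r]` is a minimal occurrence interval for `P` over `T`. -/
def IsMinOccInterval (T P : List ℤ) (ℓ r : ℕ) : Prop :=
  IsOccInterval T P ℓ r ∧
    ¬∃ ℓ' r', IsOccInterval T P ℓ' r' ∧ IntervalSsubset (ℓ', r') (ℓ, r)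


/-!
A witness of a fixed interval with pivot `(v, i)` splits as `I = A ++ i :: B`: the part `A`
left of `i` realises the left subtree of `v`, the part `B` right of `i` realises its right
subtree, and all their values exceed `T[i]`. The left part constrains only `ℓ` and the right
part only `r`, so endpoints of fixed intervals can be exchanged; hence the minimal one is
unique and `R(v, i)` is the least `r` admitting a right part. A right part inside `(i, r]` is
exactly a fixed interval `[i + 1, r]` for the right child `v.R`, pivoted at the position `j`
of its minimum, which satisfies `T[i] < T[j]`.
-/

def BTree.size : BTree → ℕ
  | .nil => 0
  | .node a b => a.size + b.size + 1

theorem CT_of_ne_nil {l : List ℤ} (h : l ≠ []) :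
    CT l = .node (CT (l.take (minidx0 l))) (CT (l.drop (minidx0 l + 1))) := by
  rw [CT, dif_neg h]

theorem size_CT (l : List ℤ) : (CT l).size = l.length := by
  by_cases h : l = []
  · subst h
    simp [CT, BTree.size]
  · have := minidx0_lt_length h
    rw [CT_of_ne_nil h, BTree.size, size_CT, size_CT, List.length_take, List.length_drop]
    omega
termination_by l.length
decreasing_by all_goals simp only [List.length_take, List.length_drop]; omega

theorem length_eq_of_CT_eq {l l' : List ℤ} (h : CT l = CT l') : l.length = l'.length := by
  rw [← size_CT l, ← size_CT l', h]

theorem minval_eq_of_minimum_eq {l : List ℤ} {a : ℤ} (h : l.minimum = a) : minval l = a := by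
  simp [minval, h]

theorem minval_mem {l : List ℤ} (h : l ≠ []) : minval l ∈ l := by
  obtain ⟨a, ha⟩ := WithTop.ne_top_iff_exists.mp (List.minimum_ne_top_of_ne_nil h)
  rw [minval_eq_of_minimum_eq ha.symm]
  exact List.minimum_mem ha.symm

theorem minval_le {l : List ℤ} {a : ℤ} (ha : a ∈ l) : minval l ≤ a := by
  obtain ⟨m, hm⟩ :=
    WithTop.ne_top_iff_exists.mp (List.minimum_ne_top_of_ne_nil (List.ne_nil_of_mem ha))
  have := List.minimum_le_of_mem' ha
  rw [← hm] at this
  rw [minval_eq_of_minimum_eq hm.symm]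
  exact_mod_cast this

theorem getElem_minidx0 {l : List ℤ} (h : l ≠ []) :
    l[minidx0 l]'(minidx0_lt_length h) = minval l :=
  List.getElem_idxOf (List.idxOf_lt_length_iff.mpr (minval_mem h))

theorem minval_append_cons {X Y : List ℤ} {a : ℤ} (h : ∀ x ∈ X ++ Y, a < x) :
    minval (X ++ a :: Y) = a := by
  refine minval_eq_of_minimum_eq (List.minimum_eq_coe_iff.mpr ⟨by simp, fun b hb => ?_⟩)
  simp only [List.mem_append, List.mem_cons] at hb
  rcases hb with hb | rfl | hb
  · exact (h b (List.mem_append_left _ hb)).le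
  · exact le_rfl
  · exact (h b (List.mem_append_right _ hb)).le

theorem CT_append_cons {X Y : List ℤ} {a : ℤ} (h : ∀ x ∈ X ++ Y, a < x) :
    CT (X ++ a :: Y) = .node (CT X) (CT Y) := by
  have haX : a ∉ X := fun ha => (h a (List.mem_append_left _ ha)).false
  have hidx : minidx0 (X ++ a :: Y) = X.length := by
    rw [minidx0, minval_append_cons h, List.idxOf_append_of_notMem haX, List.idxOf_cons_self]
    rfl
  rw [CT_of_ne_nil (by simp), hidx, List.take_left]
  simp [List.drop_append, List.drop_eq_nil_of_le]

theorem val_eq_getElem {T : List ℤ} {j : ℕ} (h1 : 1 ≤ j) (h2 : j ≤ T.length) :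
    val T j = T[j - 1] :=
  List.getD_eq_getElem _ _ _

theorem val_inj {T : List ℤ} (hT : T.Nodup) {a b : ℕ} (ha : 1 ≤ a ∧ a ≤ T.length)
    (hb : 1 ≤ b ∧ b ≤ T.length) : val T a = val T b ↔ a = b := by
  rw [val_eq_getElem ha.1 ha.2, val_eq_getElem hb.1 hb.2, hT.getElem_inj_iff]
  omega

theorem subslice_eq_map {P : List ℤ} {a b : ℕ} (ha : 1 ≤ a) (hb : b ≤ P.length) :
    subslice P a b = (List.range' a (b + 1 - a)).map (val P) := by
  apply List.ext_getElem
  · simp only [subslice, List.length_drop, List.length_take, List.length_map,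
      List.length_range']
    omega
  · intro p h _
    simp only [subslice, List.getElem_drop, List.getElem_take, List.getElem_map,
      List.getElem_range']
    simp only [subslice, List.length_drop, List.length_take] at h
    rw [val_eq_getElem (by omega) (by omega)]
    congr 1
    omega

theorem leftEnd_spec (P : List ℤ) {v : ℕ} (hv : 1 ≤ v) :
    1 ≤ leftEnd P v ∧ leftEnd P v ≤ v ∧ (∀ j, leftEnd P v ≤ j → j < v → val P v ≤ val P j) ∧
      (1 < leftEnd P v → val P (leftEnd P v - 1) < val P v) := by
  set S := (Finset.Icc 1 (v - 1)).filter (fun j => val P j < val P v) with hS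
  have hmem : ∀ j, 1 ≤ j → j < v → val P j < val P v → j ∈ S := fun j h1 h2 h3 => by
    simp only [hS, Finset.mem_filter, Finset.mem_Icc]
    exact ⟨⟨h1, by omega⟩, h3⟩
  rw [leftEnd, ← hS]
  cases hmax : S.max with
  | bot =>
    simp only [WithBot.unbotD_bot, zero_add]
    refine ⟨le_rfl, hv, fun j hj hjv => not_lt.mp fun hlt => ?_, by simp⟩
    rw [Finset.max_eq_bot.mp hmax] at hmem
    exact Finset.notMem_empty j (hmem j hj hjv hlt)
  | coe m =>
    have hm := Finset.mem_of_max hmax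
    simp only [hS, Finset.mem_filter, Finset.mem_Icc] at hm
    simp only [WithBot.unbotD_coe, Nat.add_sub_cancel]
    refine ⟨by omega, by omega, fun j hj hjv => not_lt.mp fun hlt => ?_, fun _ => hm.2⟩
    have := WithBot.coe_le_coe.mp (hmax ▸ Finset.le_max (hmem j (by omega) hjv hlt))
    omega

theorem leftEnd_eq {P : List ℤ} {v a : ℕ} (ha : 1 ≤ a) (hav : a ≤ v)
    (hge : ∀ j, a ≤ j → j < v → val P v ≤ val P j) (hlt : 1 < a → val P (a - 1) < val P v) :
    leftEnd P v = a := by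
  obtain ⟨hle1, hle, hge', hlt'⟩ := leftEnd_spec P (le_trans ha hav)
  rcases lt_trichotomy (leftEnd P v) a with h | h | h
  · exact absurd (hlt (by omega)) (not_lt.mpr (hge' _ (by omega) (by omega)))
  · exact h
  · exact absurd (hlt' (by omega)) (not_lt.mpr (hge _ (by omega) (by omega)))

theorem rightEnd_spec (P : List ℤ) {v : ℕ} (hv : v ≤ P.length) :
    v ≤ rightEnd P v ∧ rightEnd P v ≤ P.length ∧
      (∀ j, v < j → j ≤ rightEnd P v → val P v ≤ val P j) ∧
      (rightEnd P v < P.length → val P (rightEnd P v + 1) < val P v) := by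
  set S := (Finset.Icc (v + 1) P.length).filter (fun j => val P j < val P v) with hS
  have hmem : ∀ j, v < j → j ≤ P.length → val P j < val P v → j ∈ S := fun j h1 h2 h3 => by
    simp only [hS, Finset.mem_filter, Finset.mem_Icc]
    exact ⟨⟨h1, h2⟩, h3⟩
  rw [rightEnd, ← hS]
  cases hmin : S.min with
  | top =>
    simp only [WithTop.untopD_top, Nat.add_sub_cancel]
    refine ⟨hv, le_rfl, fun j hj hjn => not_lt.mp fun hlt => ?_, by omega⟩
    rw [Finset.min_eq_top.mp hmin] at hmem
    exact Finset.notMem_empty j (hmem j hj hjn hlt)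
  | coe m =>
    have hm := Finset.mem_of_min hmin
    simp only [hS, Finset.mem_filter, Finset.mem_Icc] at hm
    simp only [WithTop.untopD_coe]
    refine ⟨by omega, by omega, fun j hj hjm => not_lt.mp fun hlt => ?_, fun _ => ?_⟩
    · have := WithTop.coe_le_coe.mp (hmin ▸ Finset.min_le (hmem j hj (by omega) hlt))
      omega
    · rw [Nat.sub_add_cancel (by omega)]
      exact hm.2

theorem rightEnd_eq {P : List ℤ} {v b : ℕ} (hvb : v ≤ b) (hb : b ≤ P.length)
    (hge : ∀ j, v < j → j ≤ b → val P v ≤ val P j)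
    (hlt : b < P.length → val P (b + 1) < val P v) :
    rightEnd P v = b := by
  obtain ⟨hvr, hre, hge', hlt'⟩ := rightEnd_spec P (le_trans hvb hb)
  rcases lt_trichotomy (rightEnd P v) b with h | h | h
  · exact absurd (hlt' (by omega)) (not_lt.mpr (hge _ (by omega) (by omega)))
  · exact h
  · exact absurd (hlt (by omega)) (not_lt.mpr (hge' _ (by omega) (by omega)))

theorem Psub_eq {P : List ℤ} {v : ℕ} (hv : 1 ≤ v ∧ v ≤ P.length) :
    Psub P v =
      subslice P (leftEnd P v) (v - 1) ++ val P v :: subslice P (v + 1) (rightEnd P v) := by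
  obtain ⟨hle1, hle, -⟩ := leftEnd_spec P hv.1
  obtain ⟨hre, hren, -⟩ := rightEnd_spec P hv.2
  rw [Psub, subslice_eq_map hle1 hren, subslice_eq_map hle1 (by omega),
    subslice_eq_map (by omega) hren,
    show rightEnd P v + 1 - leftEnd P v = (v - leftEnd P v) + (rightEnd P v - v + 1) by omega,
    ← List.range'_append_1, List.range'_succ, show leftEnd P v + (v - leftEnd P v) = v by omega,
    show v - 1 + 1 - leftEnd P v = v - leftEnd P v by omega,
    show rightEnd P v + 1 - (v + 1) = rightEnd P v - v by omega]
  simp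

theorem val_lt_of_leftEnd_le_of_le_rightEnd {P : List ℤ} (hP : P.Nodup) {v j : ℕ}
    (hv : 1 ≤ v ∧ v ≤ P.length) (hj1 : leftEnd P v ≤ j) (hj2 : j ≤ rightEnd P v) (hjv : j ≠ v) :
    val P v < val P j := by
  obtain ⟨hle1, -, hgeL, -⟩ := leftEnd_spec P hv.1
  obtain ⟨-, hren, hgeR, -⟩ := rightEnd_spec P hv.2
  refine lt_of_le_of_ne ?_ fun h => hjv ((val_inj hP hv ⟨by omega, by omega⟩).mp h).symm
  rcases lt_or_gt_of_ne hjv with h | h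
  · exact hgeL j hj1 h
  · exact hgeR j h hj2

theorem CT_Psub {P : List ℤ} (hP : P.Nodup) {v : ℕ} (hv : 1 ≤ v ∧ v ≤ P.length) :
    CT (Psub P v) =
      .node (CT (subslice P (leftEnd P v) (v - 1))) (CT (subslice P (v + 1) (rightEnd P v))) := by
  obtain ⟨hle1, hle, -⟩ := leftEnd_spec P hv.1
  obtain ⟨hre, hren, -⟩ := rightEnd_spec P hv.2
  rw [Psub_eq hv]
  apply CT_append_cons
  rw [subslice_eq_map hle1 (by omega), subslice_eq_map (by omega) hren]
  simp only [List.mem_append, List.mem_map, List.mem_range'_1]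
  rintro x (⟨j, hj, rfl⟩ | ⟨j, hj, rfl⟩) <;>
    exact val_lt_of_leftEnd_le_of_le_rightEnd hP hv (by omega) (by omega) (by omega)

theorem rightEnd_eq_self_of_rightChild_eq_none {P : List ℤ} {v : ℕ} (hv : v ≤ P.length)
    (h : rightChild P v = none) : rightEnd P v = v := by
  have := (rightEnd_spec P hv).1
  unfold rightChild at h
  split_ifs at h with hvr
  omega

theorem rightChild_spec {P : List ℤ} {v u : ℕ} (hv : v ≤ P.length) (h : rightChild P v = some u) :
    v < u ∧ u ≤ rightEnd P v ∧ ∀ j, v < j → j ≤ rightEnd P v → val P u ≤ val P j := by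
  unfold rightChild at h
  split_ifs at h with hvr
  obtain rfl := Option.some_inj.mp h
  have hre := (rightEnd_spec P hv).2.1
  have hW : subslice P (v + 1) (rightEnd P v) =
      (List.range' (v + 1) (rightEnd P v - v)).map (val P) := by
    rw [subslice_eq_map (by omega) hre, show rightEnd P v + 1 - (v + 1) = rightEnd P v - v by omega]
  rw [hW]
  have hWne : (List.range' (v + 1) (rightEnd P v - v)).map (val P) ≠ [] := by
    simp only [ne_eq, List.map_eq_nil_iff, List.range'_eq_nil_iff]
    omega
  have hk := minidx0_lt_length hWne
  have hmin := getElem_minidx0 hWne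
  simp only [List.length_map, List.length_range'] at hk
  simp only [List.getElem_map, List.getElem_range', one_mul] at hmin
  refine ⟨by omega, by omega, fun j hj1 hj2 => ?_⟩
  rw [hmin]
  exact minval_le (List.mem_map_of_mem (List.mem_range'_1.mpr ⟨by omega, by omega⟩))

theorem rightChild_bounds {P : List ℤ} {v u : ℕ} (hv : v ≤ P.length)
    (h : rightChild P v = some u) : 1 ≤ u ∧ u ≤ P.length := by
  obtain ⟨hvu, hur, -⟩ := rightChild_spec hv h
  exact ⟨by omega, hur.trans (rightEnd_spec P hv).2.1⟩

theorem Psub_of_rightChild_eq_some {P : List ℤ} (hP : P.Nodup) {v u : ℕ}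
    (hv : 1 ≤ v ∧ v ≤ P.length) (h : rightChild P v = some u) :
    Psub P u = subslice P (v + 1) (rightEnd P v) := by
  obtain ⟨hvu, hur, hmin⟩ := rightChild_spec hv.2 h
  obtain ⟨-, hren, -, hnext⟩ := rightEnd_spec P hv.2
  have hvu' : val P v < val P u :=
    val_lt_of_leftEnd_le_of_le_rightEnd hP hv (by have := (leftEnd_spec P hv.1).2.1; omega) hur
      (by omega)
  rw [Psub, leftEnd_eq (a := v + 1) (by omega) (by omega)
      (fun j h1 h2 => hmin j (by omega) (by omega)) (fun _ => by simpa using hvu'),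
    rightEnd_eq hur hren (fun j h1 h2 => hmin j (by omega) h2) (fun h => (hnext h).trans hvu')]

theorem pairwise_lt_append_cons_iff {α : Type*} [Preorder α] {A B : List α} {x : α} :
    (A ++ x :: B).Pairwise (· < ·) ↔
      A.Pairwise (· < ·) ∧ B.Pairwise (· < ·) ∧ (∀ a ∈ A, a < x) ∧ ∀ b ∈ B, x < b := by
  simp only [List.pairwise_append, List.pairwise_cons, List.mem_cons, forall_eq_or_imp]
  constructor
  · rintro ⟨hA, ⟨hxB, hB⟩, hAxB⟩
    exact ⟨hA, hB, fun a ha => (hAxB a ha).1, hxB⟩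
  · rintro ⟨hA, hB, hAx, hxB⟩
    exact ⟨hA, ⟨hxB, hB⟩, fun a ha => ⟨hAx a ha, fun b hb => (hAx a ha).trans (hxB b hb)⟩⟩

section seqAt

variable {T : List ℤ} {A B : List ℕ} {i : ℕ}

theorem seqAt_append_cons : seqAt T (A ++ i :: B) = seqAt T A ++ val T i :: seqAt T B := by
  simp [seqAt]

theorem forall_mem_seqAt_append (h : ∀ j ∈ A ++ B, val T i < val T j) :
    ∀ x ∈ seqAt T A ++ seqAt T B, val T i < x := by
  intro x hx
  rw [seqAt, seqAt, ← List.map_append] at hx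
  obtain ⟨j, hj, rfl⟩ := List.mem_map.mp hx
  exact h j hj

theorem CT_seqAt_append_cons (h : ∀ j ∈ A ++ B, val T i < val T j) :
    CT (seqAt T (A ++ i :: B)) = .node (CT (seqAt T A)) (CT (seqAt T B)) := by
  rw [seqAt_append_cons, CT_append_cons (forall_mem_seqAt_append h)]

theorem minval_seqAt_append_cons (h : ∀ j ∈ A ++ B, val T i < val T j) :
    minval (seqAt T (A ++ i :: B)) = val T i := by
  rw [seqAt_append_cons, minval_append_cons (forall_mem_seqAt_append h)]

end seqAt

theorem val_lt_of_minval_eq {T : List ℤ} (hT : T.Nodup) {I : List ℕ} {i j : ℕ}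
    (hI : ∀ k ∈ I, 1 ≤ k ∧ k ≤ T.length) (hiI : i ∈ I) (hmin : val T i = minval (seqAt T I))
    (hjI : j ∈ I) (hji : j ≠ i) : val T i < val T j :=
  lt_of_le_of_ne (hmin ▸ minval_le (List.mem_map_of_mem hjI))
    fun h => hji ((val_inj hT (hI j hjI) (hI i hiI)).mp h.symm)

def CTOccursIn (T Q : List ℤ) (s : Set ℕ) : Prop :=
  ∃ I : List ℕ, I.Pairwise (· < ·) ∧ (∀ j ∈ I, j ∈ s) ∧ CT (seqAt T I) = CT Q

theorem isFixedInterval_iff {T P : List ℤ} (hT : T.Nodup) (hP : P.Nodup) {v i ℓ r : ℕ}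
    (hv : 1 ≤ v ∧ v ≤ P.length) :
    IsFixedInterval T P v i ℓ r ↔ 1 ≤ ℓ ∧ ℓ ≤ i ∧ i ≤ r ∧ r ≤ T.length ∧
      CTOccursIn T (subslice P (leftEnd P v) (v - 1)) (Set.Ico ℓ i ∩ {a | val T i < val T a}) ∧
      CTOccursIn T (subslice P (v + 1) (rightEnd P v)) (Set.Ioc i r ∩ {b | val T i < val T b}) := by
  constructor
  · rintro ⟨hℓ, hr, I, ⟨-, hI, hIn⟩, hiI, hIlr, hCT, hmin⟩
    obtain ⟨A, B, rfl⟩ := List.append_of_mem hiI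
    obtain ⟨hA, hB, hAi, hiB⟩ := pairwise_lt_append_cons_iff.mp hI
    have hlt : ∀ j ∈ A ++ B, val T i < val T j := fun j hj => by
      rcases List.mem_append.mp hj with h | h
      · exact val_lt_of_minval_eq hT hIn hiI hmin (by simp [h]) (hAi j h).ne
      · exact val_lt_of_minval_eq hT hIn hiI hmin (by simp [h]) (hiB j h).ne'
    rw [CT_seqAt_append_cons hlt, CT_Psub hP hv] at hCT
    obtain ⟨hCA, hCB⟩ := BTree.node.inj hCT
    refine ⟨hℓ, (hIlr i hiI).1, (hIlr i hiI).2, hr, ⟨A, hA, fun a ha => ?_, hCA⟩,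
      ⟨B, hB, fun b hb => ?_, hCB⟩⟩
    · exact ⟨⟨(hIlr a (by simp [ha])).1, hAi a ha⟩, hlt a (by simp [ha])⟩
    · exact ⟨⟨hiB b hb, (hIlr b (by simp [hb])).2⟩, hlt b (by simp [hb])⟩
  · rintro ⟨hℓ, hℓi, hir, hr, ⟨A, hA, hAs, hCA⟩, ⟨B, hB, hBs, hCB⟩⟩
    have hlt : ∀ j ∈ A ++ B, val T i < val T j := by
      intro j hj
      rcases List.mem_append.mp hj with h | h
      exacts [(hAs j h).2, (hBs j h).2]
    have hCT : CT (seqAt T (A ++ i :: B)) = CT (Psub P v) := by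
      rw [CT_seqAt_append_cons hlt, CT_Psub hP hv, hCA, hCB]
    have hbound : ∀ j ∈ A ++ i :: B, ℓ ≤ j ∧ j ≤ r := by
      simp only [List.mem_append, List.mem_cons]
      rintro j (h | rfl | h)
      · exact ⟨(hAs j h).1.1, ((hAs j h).1.2.trans_le hir).le⟩
      · exact ⟨hℓi, hir⟩
      · exact ⟨hℓi.trans (hBs j h).1.1.le, (hBs j h).1.2⟩
    refine ⟨hℓ, hr, A ++ i :: B, ⟨?_, ?_, fun j hj => ?_⟩, by simp, hbound, hCT,
      (minval_seqAt_append_cons hlt).symm⟩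
    · simpa [seqAt] using length_eq_of_CT_eq hCT
    · exact pairwise_lt_append_cons_iff.mpr
        ⟨hA, hB, fun a ha => (hAs a ha).1.2, fun b hb => (hBs b hb).1.1⟩
    · exact ⟨hℓ.trans (hbound j hj).1, (hbound j hj).2.trans hr⟩

section FixedInterval

variable {T P : List ℤ} {v i ℓ r : ℕ}

theorem IsFixedInterval.pivot_mem_Icc (h : IsFixedInterval T P v i ℓ r) : i ∈ Set.Icc ℓ r :=
  let ⟨_, _, _, _, hiI, hI, _⟩ := h
  hI i hiI

theorem IsFixedInterval.mono {ℓ' r' : ℕ} (h : IsFixedInterval T P v i ℓ r) (hℓ' : 1 ≤ ℓ')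
    (hℓ : ℓ' ≤ ℓ) (hr : r ≤ r') (hr' : r' ≤ T.length) : IsFixedInterval T P v i ℓ' r' :=
  let ⟨_, _, I, hIsub, hiI, hI, hCT, hmin⟩ := h
  ⟨hℓ', hr', I, hIsub, hiI, fun j hj => ⟨hℓ.trans (hI j hj).1, (hI j hj).2.trans hr⟩, hCT, hmin⟩

theorem IsFixedInterval.exists_isMinFixedInterval (h : IsFixedInterval T P v i ℓ r) :
    ∃ ℓ' r', IsMinFixedInterval T P v i ℓ' r' ∧ ℓ ≤ ℓ' ∧ r' ≤ r := by
  obtain ⟨⟨ℓ', r'⟩, ⟨hfix, hℓ, hr⟩, hmin⟩ := (measure fun p : ℕ × ℕ => p.2 - p.1).wf.has_min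
    {p | IsFixedInterval T P v i p.1 p.2 ∧ ℓ ≤ p.1 ∧ p.2 ≤ r} ⟨(ℓ, r), h, le_rfl, le_rfl⟩
  refine ⟨ℓ', r', ⟨hfix, ?_⟩, hℓ, hr⟩
  rintro ⟨ℓ'', r'', hfix', hℓ'', hr'', hne⟩
  obtain ⟨hℓi, hir⟩ := hfix'.pivot_mem_Icc
  refine hmin (ℓ'', r'') ⟨hfix', hℓ.trans hℓ'', hr''.trans hr⟩ ?_
  show r'' - ℓ'' < r' - ℓ'
  simp only [ne_eq, Prod.mk.injEq] at hne
  omega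

theorem IsMinFixedInterval.le_of_isFixedInterval (hT : T.Nodup) (hP : P.Nodup)
    (hv : 1 ≤ v ∧ v ≤ P.length) {ℓ₀ r₀ : ℕ} (hmin : IsMinFixedInterval T P v i ℓ₀ r₀)
    (h : IsFixedInterval T P v i ℓ r) : ℓ ≤ ℓ₀ ∧ r₀ ≤ r := by
  obtain ⟨hℓ, hℓi, hir, hr, hL, hR⟩ := (isFixedInterval_iff hT hP hv).mp h
  obtain ⟨hℓ₀, hℓ₀i, hir₀, hr₀, hL₀, hR₀⟩ := (isFixedInterval_iff hT hP hv).mp hmin.1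
  have hfix : IsFixedInterval T P v i (max ℓ ℓ₀) (min r r₀) := by
    refine (isFixedInterval_iff hT hP hv).mpr ⟨le_max_of_le_left hℓ, max_le hℓi hℓ₀i,
      le_min hir hir₀, min_le_of_left_le hr, ?_, ?_⟩
    · rcases max_choice ℓ ℓ₀ with h | h <;> rw [h]
      exacts [hL, hL₀]
    · rcases min_choice r r₀ with h | h <;> rw [h]
      exacts [hR, hR₀]
  have heq : (max ℓ ℓ₀, min r r₀) = (ℓ₀, r₀) := by
    by_contra hne
    exact hmin.2 ⟨_, _, hfix, le_max_right _ _, min_le_right _ _, hne⟩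
  simpa only [Prod.mk.injEq, max_eq_right_iff, min_eq_right_iff] using heq

theorem IsMinFixedInterval.unique (hT : T.Nodup) (hP : P.Nodup) (hv : 1 ≤ v ∧ v ≤ P.length)
    {ℓ₁ r₁ ℓ₂ r₂ : ℕ} (h₁ : IsMinFixedInterval T P v i ℓ₁ r₁)
    (h₂ : IsMinFixedInterval T P v i ℓ₂ r₂) : ℓ₁ = ℓ₂ ∧ r₁ = r₂ := by
  obtain ⟨hℓ₂, hr₁⟩ := h₁.le_of_isFixedInterval hT hP hv h₂.1
  obtain ⟨hℓ₁, hr₂⟩ := h₂.le_of_isFixedInterval hT hP hv h₁.1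
  omega

theorem mfiL_eq (hT : T.Nodup) (hP : P.Nodup) (hv : 1 ≤ v ∧ v ≤ P.length)
    (h : IsMinFixedInterval T P v i ℓ r) : mfiL T P v i = ℓ := by
  have hex : ∃ ℓ r, IsMinFixedInterval T P v i ℓ r := ⟨ℓ, r, h⟩
  rw [mfiL, dif_pos hex, (hex.choose_spec.choose_spec.unique hT hP hv h).1]

theorem mfiR_eq (hT : T.Nodup) (hP : P.Nodup) (hv : 1 ≤ v ∧ v ≤ P.length)
    (h : IsMinFixedInterval T P v i ℓ r) : mfiR T P v i = r := by
  have hex : ∃ ℓ r, IsMinFixedInterval T P v i ℓ r := ⟨ℓ, r, h⟩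
  rw [mfiR, dif_pos hex, (hex.choose_spec.choose_spec.unique hT hP hv h).2]

theorem exists_isMinFixedInterval_of_lt_mfiL {k : ℕ} (h : (k : WithBot ℕ) < mfiL T P v i) :
    ∃ ℓ r, IsMinFixedInterval T P v i ℓ r ∧ k < ℓ := by
  by_cases hex : ∃ ℓ r, IsMinFixedInterval T P v i ℓ r
  · rw [mfiL, dif_pos hex] at h
    exact ⟨_, _, hex.choose_spec.choose_spec, WithBot.coe_lt_coe.mp h⟩
  · rw [mfiL, dif_neg hex] at h
    exact absurd h not_lt_bot

end FixedInterval

theorem ctOccursIn_Psub_iff {T P : List ℤ} {u i r : ℕ} (hr : r ≤ T.length) (hne : Psub P u ≠ []) :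
    CTOccursIn T (Psub P u) (Set.Ioc i r ∩ {b | val T i < val T b}) ↔
      ∃ j, val T i < val T j ∧ IsFixedInterval T P u j (i + 1) r := by
  constructor
  · rintro ⟨B, hB, hBs, hCT⟩
    have hlen : B.length = (Psub P u).length := by simpa [seqAt] using length_eq_of_CT_eq hCT
    have hBne : seqAt T B ≠ [] := by
      rw [← List.length_pos_iff] at hne ⊢
      simpa [seqAt, hlen] using hne
    obtain ⟨j, hjB, hj⟩ := List.mem_map.mp (minval_mem hBne)
    have hBs' : ∀ b ∈ B, i < b ∧ b ≤ r := fun b hb => (hBs b hb).1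
    refine ⟨j, (hBs j hjB).2, by omega, hr, B, ⟨hlen, hB, fun b hb => ?_⟩, hjB, hBs', hCT, hj⟩
    have := hBs' b hb
    omega
  · rintro ⟨j, hij, -, -, I, ⟨-, hI, -⟩, hjI, hIlr, hCT, hmin⟩
    refine ⟨I, hI, fun b hb => ⟨hIlr b hb, hij.trans_le ?_⟩, hCT⟩
    rw [hmin]
    exact minval_le (List.mem_map_of_mem hb)

theorem ctOccursIn_right_iff_of_rightChild_eq_some {T P : List ℤ} (hP : P.Nodup) {v u i r : ℕ}
    (hv : 1 ≤ v ∧ v ≤ P.length) (hrc : rightChild P v = some u) (hr : r ≤ T.length) :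
    CTOccursIn T (subslice P (v + 1) (rightEnd P v)) (Set.Ioc i r ∩ {b | val T i < val T b}) ↔
      ∃ j, val T i < val T j ∧ IsFixedInterval T P u j (i + 1) r := by
  rw [← Psub_of_rightChild_eq_some hP hv hrc]
  refine ctOccursIn_Psub_iff hr ?_
  simp [Psub_eq (rightChild_bounds hv.2 hrc)]

section Recurrence

variable {T P : List ℤ} {v i ℓ₀ r₀ : ℕ}

theorem IsMinFixedInterval.right_le_of_ctOccursIn (hT : T.Nodup) (hP : P.Nodup)
    (hv : 1 ≤ v ∧ v ≤ P.length) (hmin : IsMinFixedInterval T P v i ℓ₀ r₀) {r : ℕ} (hir : i ≤ r)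
    (hr : r ≤ T.length)
    (hR : CTOccursIn T (subslice P (v + 1) (rightEnd P v))
      (Set.Ioc i r ∩ {b | val T i < val T b})) :
    r₀ ≤ r := by
  obtain ⟨hℓ₀, hℓ₀i, -, -, hL, -⟩ := (isFixedInterval_iff hT hP hv).mp hmin.1
  exact (hmin.le_of_isFixedInterval hT hP hv
    ((isFixedInterval_iff hT hP hv).mpr ⟨hℓ₀, hℓ₀i, hir, hr, hL, hR⟩)).2

theorem IsMinFixedInterval.mfiR_eq_of_rightChild_eq_none (hT : T.Nodup) (hP : P.Nodup)
    (hv : 1 ≤ v ∧ v ≤ P.length) (hmin : IsMinFixedInterval T P v i ℓ₀ r₀)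
    (hrc : rightChild P v = none) : mfiR T P v i = i := by
  obtain ⟨hℓ₀i, hir₀⟩ := hmin.1.pivot_mem_Icc
  have hR : CTOccursIn T (subslice P (v + 1) (rightEnd P v))
      (Set.Ioc i i ∩ {b | val T i < val T b}) := by
    rw [rightEnd_eq_self_of_rightChild_eq_none hv.2 hrc]
    exact ⟨[], List.Pairwise.nil, by simp, by simp [subslice, seqAt]⟩
  rw [mfiR_eq hT hP hv hmin,
    le_antisymm (hmin.right_le_of_ctOccursIn hT hP hv le_rfl (hir₀.trans hmin.1.2.1) hR) hir₀]

theorem IsMinFixedInterval.le_mfiR_of_rightChild_eq_some (hT : T.Nodup) (hP : P.Nodup)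
    (hv : 1 ≤ v ∧ v ≤ P.length) (hmin : IsMinFixedInterval T P v i ℓ₀ r₀) {u j : ℕ}
    (hrc : rightChild P v = some u) (hij : val T i < val T j)
    (hiL : (i : WithBot ℕ) < mfiL T P u j) : (r₀ : WithTop ℕ) ≤ mfiR T P u j := by
  have hu := rightChild_bounds hv.2 hrc
  obtain ⟨ℓ, r, hminu, hiℓ⟩ := exists_isMinFixedInterval_of_lt_mfiL hiL
  obtain ⟨hℓj, hjr⟩ := hminu.1.pivot_mem_Icc
  have hr : r ≤ T.length := hminu.1.2.1
  have hR := (ctOccursIn_right_iff_of_rightChild_eq_some hP hv hrc hr).mpr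
    ⟨j, hij, hminu.1.mono (by omega) hiℓ le_rfl hr⟩
  rw [mfiR_eq hT hP hu hminu]
  exact_mod_cast hmin.right_le_of_ctOccursIn hT hP hv (by omega) hr hR

theorem IsMinFixedInterval.exists_mfiR_le_of_rightChild_eq_some (hT : T.Nodup) (hP : P.Nodup)
    (hv : 1 ≤ v ∧ v ≤ P.length) (hmin : IsMinFixedInterval T P v i ℓ₀ r₀) {u : ℕ}
    (hrc : rightChild P v = some u) :
    ∃ j ∈ Finset.Icc (i + 1) T.length, val T i < val T j ∧ (i : WithBot ℕ) < mfiL T P u j ∧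
      mfiR T P u j ≤ r₀ := by
  have hu := rightChild_bounds hv.2 hrc
  obtain ⟨-, -, -, hr₀, -, hR⟩ := (isFixedInterval_iff hT hP hv).mp hmin.1
  obtain ⟨j, hij, hfix⟩ := (ctOccursIn_right_iff_of_rightChild_eq_some hP hv hrc hr₀).mp hR
  obtain ⟨ℓ, r, hminu, hiℓ, hr⟩ := hfix.exists_isMinFixedInterval
  obtain ⟨hℓj, hjr⟩ := hminu.1.pivot_mem_Icc
  refine ⟨j, Finset.mem_Icc.mpr ⟨by omega, by omega⟩, hij, ?_, ?_⟩
  · rw [mfiL_eq hT hP hu hminu]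
    exact WithBot.coe_lt_coe.mpr hiℓ
  · rw [mfiR_eq hT hP hu hminu]
    exact WithTop.coe_le_coe.mpr hr

end Recurrence

open Classical in
theorem R_recurrence_general
    (T P : List ℤ) (hT : T.Nodup) (hP : P.Nodup)
    (v i : ℕ) (hv : 1 ≤ v ∧ v ≤ P.length)
    :
    (¬(∃ ℓ r, IsMinFixedInterval T P v i ℓ r) → mfiR T P v i = ⊤) ∧
    ((∃ ℓ r, IsMinFixedInterval T P v i ℓ r) → rightChild P v = none →
      mfiR T P v i = (i : WithTop ℕ)) ∧
    (∀ u, (∃ ℓ r, IsMinFixedInterval T P v i ℓ r) → rightChild P v = some u →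
      mfiR T P v i =
        ((Finset.Icc (i + 1) T.length).filter
          (fun j => val T i < val T j ∧ (i : WithBot ℕ) < mfiL T P u j)).inf
          (fun j => mfiR T P u j)) := by
  refine ⟨fun h => by rw [mfiR, dif_neg h], fun ⟨ℓ₀, r₀, hmin⟩ hrc =>
    hmin.mfiR_eq_of_rightChild_eq_none hT hP hv hrc, fun u ⟨ℓ₀, r₀, hmin⟩ hrc => ?_⟩
  obtain ⟨j, hj, hij, hiL, hle⟩ := hmin.exists_mfiR_le_of_rightChild_eq_some hT hP hv hrc
  rw [mfiR_eq hT hP hv hmin]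
  refine le_antisymm (Finset.le_inf fun k hk => ?_)
    ((Finset.inf_le (Finset.mem_filter.mpr ⟨hj, hij, hiL⟩)).trans hle)
  obtain ⟨-, hik, hiLk⟩ := Finset.mem_filter.mp hk
  exact hmin.le_mfiR_of_rightChild_eq_some hT hP hv hrc hik hiLk

open Classical in
/-- The recurrence for `R(v, i)`, the right endpoint of the minimal
fixed-interval with pivot `(v, i)`:
`R(v,i) = ∞` if `mfi(v,i) = [-∞,∞]`; `R(v,i) = i` if `mfi(v,i) ≠ [-∞,∞]` and `v` has no
right child in `CT(P)`; and otherwise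
`R(v,i) = min { R(v.R, j) : i+1 ≤ j ≤ n, T[i] < T[j], i < L(v.R, j) }`. -/
theorem R_recurrence
    (T P : List ℤ) (hT : T.Nodup) (hP : P.Nodup)
    (hm : 1 ≤ P.length) (hmn : P.length ≤ T.length)
    (v i : ℕ) (hv : 1 ≤ v ∧ v ≤ P.length) (hi : 1 ≤ i ∧ i ≤ T.length)
    :
    (¬(∃ ℓ r, IsMinFixedInterval T P v i ℓ r) → mfiR T P v i = ⊤) ∧
    ((∃ ℓ r, IsMinFixedInterval T P v i ℓ r) → rightChild P v = none →
      mfiR T P v i = (i : WithTop ℕ)) ∧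
    (∀ u, (∃ ℓ r, IsMinFixedInterval T P v i ℓ r) → rightChild P v = some u →
      mfiR T P v i =
        ((Finset.Icc (i + 1) T.length).filter
          (fun j => val T i < val T j ∧ (i : WithBot ℕ) < mfiL T P u j)).inf
          (fun j => mfiR T P u j)) :=
  R_recurrence_general T P hT hP v i hv
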